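/- arXiv:1503.06591 — 2 statements merged into one kernel-verified Lean document; each statement's English description precedes it below -/
import Mathlib

section
/- Define the formal power series H(x) = Σ_{n≥0} a_n x^n over ℤ with a_n = Σ_{k=0}^n C(n,k)^2 C(2k,k). For every prime p, the reduction of H modulo p satisfies H(x) = H_p(x) · H_p(x^p) · H_p(x^{p^2}) · ⋯ in 𝔽_p[[x]], where H_p(x) = Σ_{n=0}^{p-1} a_n x^n mod p. -/
/-! Lucas's theorem gives `C(pm+r, pk+j) ≡ C(m,k) C(r,j)` and `C(2(pk+j), pk+j) ≡ C(2k,k) C(2j,j)`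
mod `p` for `r, j < p` (when `2j ≥ p` both sides of the second congruence vanish), hence
`a_{pm+r} ≡ a_m a_r`. As `H_p` has degree `< p`, the coefficient of `x^n` in `P(x^p) · H_p(x)` is
`[x^(n / p)] P · a_(n % p)`, so by induction on `N` the coefficients of `∏_{i<N} H_p(x^(p^i))`
of index `< p^N` are the `a_n`. -/

open PowerSeries Finset

/-- The coefficients `a n = Σ_{k=0}^n C(n,k)² C(2k,k)`. -/
def aSeq (n : ℕ) : ℕ :=
  ∑ k ∈ Finset.range (n + 1), (Nat.choose n k) ^ 2 * Nat.choose (2 * k) k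

/-- The generating series `H` reduced mod `p`. -/
noncomputable def Hmod (p : ℕ) : PowerSeries (ZMod p) :=
  PowerSeries.mk fun n => (aSeq n : ZMod p)

/-- The truncation `H_p(x) = Σ_{n=0}^{p-1} a_n x^n` mod `p`, as a polynomial. -/
noncomputable def Htrunc (p : ℕ) : Polynomial (ZMod p) :=
  ∑ n ∈ Finset.range p, Polynomial.C (aSeq n : ZMod p) * Polynomial.X ^ n

open scoped Polynomial

namespace PowerSeries

theorem aeval_X_eq_coe {R : Type*} [CommSemiring R] (Q : R[X]) :
    Polynomial.aeval (X : R⟦X⟧) Q = Q := by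
  rw [Polynomial.aeval_def]
  exact Polynomial.eval₂_C_X_eq_coe

variable {R : Type*} [CommRing R] {p : ℕ} (hp : p ≠ 0)

include hp in
theorem coeff_expand_mul_eq_of_coeff_eq_zero (Φ ψ : R⟦X⟧)
    (hψ : ∀ j, p ≤ j → coeff j ψ = 0) (n : ℕ) :
    coeff n (expand p hp Φ * ψ) = coeff (n / p) Φ * coeff (n % p) ψ := by
  rw [coeff_mul, sum_eq_single_of_mem (p * (n / p), n % p)
    (HasAntidiagonal.mem_antidiagonal.2 (Nat.div_add_mod n p)), coeff_expand_mul]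
  rintro ⟨i, j⟩ hij hne
  rw [HasAntidiagonal.mem_antidiagonal] at hij
  rw [coeff_expand]
  split_ifs with hdvd
  · obtain ⟨c, rfl⟩ := hdvd
    rcases lt_or_ge j p with hj | hj
    · obtain ⟨rfl, rfl⟩ := (Nat.div_mod_unique (d := c) (c := j) (Nat.pos_of_ne_zero hp)).2
        ⟨by simpa [add_comm] using hij, hj⟩
      exact absurd rfl hne
    · rw [hψ j hj, mul_zero]
  · rw [zero_mul]

theorem expand_aeval_X_pow (Q : R[X]) (t : ℕ) :
    expand p hp (Polynomial.aeval (X ^ t : R⟦X⟧) Q) = Polynomial.aeval (X ^ (p * t) : R⟦X⟧) Q := by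
  rw [← Polynomial.aeval_algHom_apply, map_pow, expand_X, ← pow_mul]

theorem prod_range_succ_aeval_X_pow_pow (Q : R[X]) (N : ℕ) :
    ∏ i ∈ range (N + 1), Polynomial.aeval (X ^ p ^ i : R⟦X⟧) Q =
      expand p hp (∏ i ∈ range N, Polynomial.aeval (X ^ p ^ i : R⟦X⟧) Q) * Q := by
  simp only [prod_range_succ', pow_zero, pow_one, aeval_X_eq_coe, map_prod,
    expand_aeval_X_pow, pow_succ']

include hp in
theorem coeff_prod_aeval_X_pow_pow_trunc {φ : R⟦X⟧} (h0 : coeff 0 φ = 1)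
    (hmul : ∀ m r, r < p → coeff (p * m + r) φ = coeff m φ * coeff r φ) {N n : ℕ}
    (hn : n < p ^ N) :
    coeff n (∏ i ∈ range N, Polynomial.aeval (X ^ p ^ i : R⟦X⟧) (trunc p φ)) = coeff n φ := by
  induction N generalizing n with
  | zero =>
    rw [pow_zero, Nat.lt_one_iff] at hn
    rw [hn, prod_range_zero, coeff_one, if_pos rfl, h0]
  | succ N ih =>
    have hpos := Nat.pos_of_ne_zero hp
    have htrunc : ∀ j, p ≤ j → coeff j (trunc p φ : R⟦X⟧) = 0 := fun j hj => by
      rw [Polynomial.coeff_coe, coeff_trunc, if_neg hj.not_gt]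
    rw [prod_range_succ_aeval_X_pow_pow hp, coeff_expand_mul_eq_of_coeff_eq_zero hp _ _ htrunc,
      ih (Nat.div_lt_of_lt_mul (by rwa [← pow_succ'])), Polynomial.coeff_coe, coeff_trunc,
      if_pos (Nat.mod_lt n hpos), ← hmul _ _ (Nat.mod_lt n hpos), Nat.div_add_mod]

end PowerSeries

theorem Finset.sum_range_mul_eq_sum_sum {M : Type*} [AddCommMonoid M] (f : ℕ → M) (p q : ℕ) :
    ∑ k ∈ range (p * q), f k = ∑ i ∈ range q, ∑ j ∈ range p, f (p * i + j) := by
  induction q with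
  | zero => simp
  | succ q ih => rw [Nat.mul_succ, sum_range_add, ih, sum_range_succ]

theorem aSeq_eq_sum_range {n B : ℕ} (h : n < B) :
    aSeq n = ∑ k ∈ range B, n.choose k ^ 2 * k.centralBinom := by
  simp only [aSeq, Nat.centralBinom_eq_two_mul_choose]
  refine sum_subset (range_subset_range.2 h) fun k _ hk => ?_
  rw [Nat.choose_eq_zero_of_lt (by simpa using hk), zero_pow two_ne_zero, zero_mul]

theorem Htrunc_eq_trunc (p : ℕ) : Htrunc p = trunc p (Hmod p) := by
  ext j
  simp [Htrunc, Hmod, coeff_trunc, Polynomial.coeff_X_pow]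

section Lucas

variable (p : ℕ) [Fact p.Prime]

theorem choose_mul_add_cast {b d : ℕ} (hb : b < p) (hd : d < p) (a c : ℕ) :
    ((p * a + b).choose (p * c + d) : ZMod p) = a.choose c * b.choose d := by
  have hp := (Fact.out : p.Prime).pos
  have := (ZMod.intCast_eq_intCast_iff _ _ _).2
    (Choose.choose_modEq_choose_mod_mul_choose_div (n := p * a + b) (k := p * c + d) (p := p))
  push_cast at this
  simp only [Nat.mul_add_mod, Nat.mod_eq_of_lt hb, Nat.mod_eq_of_lt hd, Nat.mul_add_div hp,
    Nat.div_eq_of_lt hb, Nat.div_eq_of_lt hd, add_zero] at this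
  rw [this, mul_comm]

theorem centralBinom_mul_add_cast {d : ℕ} (hd : d < p) (c : ℕ) :
    ((p * c + d).centralBinom : ZMod p) = c.centralBinom * d.centralBinom := by
  simp only [Nat.centralBinom_eq_two_mul_choose]
  rcases lt_or_ge (2 * d) p with hlt | hge
  · rw [show 2 * (p * c + d) = p * (2 * c) + 2 * d by ring, choose_mul_add_cast p hlt hd]
  · obtain ⟨e, he⟩ := Nat.exists_eq_add_of_le hge
    have hep : e < p := by omega
    have hvanish : (e.choose d : ZMod p) = 0 := by
      rw [Nat.choose_eq_zero_of_lt (by omega), Nat.cast_zero]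
    have hd' : ((2 * d).choose d : ZMod p) = 0 := by
      simpa [he, hvanish] using choose_mul_add_cast p hep hd 1 0
    rw [show 2 * (p * c + d) = p * (2 * c + 1) + e by ring_nf; omega,
      choose_mul_add_cast p hep hd, hvanish, hd', mul_zero, mul_zero]

theorem aSeq_mul_add_cast {r : ℕ} (hr : r < p) (m : ℕ) :
    (aSeq (p * m + r) : ZMod p) = aSeq m * aSeq r := by
  have hlt : p * m + r < p * (m + 1) := by rw [Nat.mul_succ]; omega
  rw [aSeq_eq_sum_range hlt, aSeq_eq_sum_range m.lt_succ_self, aSeq_eq_sum_range hr]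
  push_cast
  rw [sum_range_mul_eq_sum_sum, sum_mul_sum]
  refine sum_congr rfl fun c _ => sum_congr rfl fun d hd => ?_
  rw [choose_mul_add_cast p hr (mem_range.1 hd), centralBinom_mul_add_cast p (mem_range.1 hd)]
  ring

end Lucas

/-- The partial products already agree with `H` below degree `p ^ N`: this is the `(x)`-adic
convergence of the infinite product to `H`. -/
theorem H_eq_prod_Htrunc (p : ℕ) (hp : p.Prime) (N n : ℕ) (hn : n < p ^ N) :
    PowerSeries.coeff (R := ZMod p) n (Hmod p) =
      PowerSeries.coeff (R := ZMod p) n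
        (∏ i ∈ Finset.range N,
          Polynomial.aeval ((PowerSeries.X : PowerSeries (ZMod p)) ^ p ^ i) (Htrunc p)) := by
  have := Fact.mk hp
  rw [Htrunc_eq_trunc, coeff_prod_aeval_X_pow_pow_trunc hp.ne_zero (by simp [Hmod, aSeq])
    (fun m r hr => by simp only [Hmod, coeff_mk, aSeq_mul_add_cast p hr]) hn]
end

section
/- H(x) = Σ_{n≥0} a_n x^n with a_n = Σ_{k=0}^n C(n,k)^2 C(2k,k) satisfies H(x) = (1/(1-3x)) · F(27x^2(1-x)/(1-3x)^3), where F(z) = Σ_{n≥0} ((3n)!/(n!)^3) (z/27)^n = ₂F₁(1/3,2/3;1;z), as formal power series over ℚ. -/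
open PowerSeries Finset

/-- The generating series `H = Σ a_n x^n ∈ ℚ⟦x⟧`. -/
noncomputable def Hq : PowerSeries ℚ := PowerSeries.mk fun n => (aSeq n : ℚ)

/-- The coefficients of the hypergeometric series `F(z) = ₂F₁(1/3,2/3;1;z)
= Σ ((3n)!/(n!)³)(z/27)^n`. -/
noncomputable def fCoeff (n : ℕ) : ℚ :=
  (Nat.factorial (3 * n) : ℚ) / ((Nat.factorial n : ℚ) ^ 3) / 27 ^ n

/-- Composition `Σ_n c_n u^n` of a coefficient sequence `c` with a power series `u`
having zero constant term: the `n`-th coefficient only involves `u^k` for `k ≤ n`. -/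
noncomputable def seriesComp (c : ℕ → ℚ) (u : PowerSeries ℚ) : PowerSeries ℚ :=
  PowerSeries.mk fun n =>
    PowerSeries.coeff (R := ℚ) n (∑ k ∈ Finset.range (n + 1), PowerSeries.C (R := ℚ) (c k) * u ^ k)

/-- The power series `27x²(1-x)/(1-3x)³ ∈ ℚ⟦x⟧`; it has zero constant term. -/
noncomputable def wSeries : PowerSeries ℚ :=
  27 * PowerSeries.X ^ 2 * (1 - PowerSeries.X) * ((1 - 3 * PowerSeries.X)⁻¹) ^ 3

/-
Both `(1 - 3x) H(x)` and `Y(x) = F(w(x))`, `w = 27x²(1-x)/(1-3x)³`, are power series solutions of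
one second-order linear differential equation `L y = 0` whose indicial roots at `0` are both `0`;
such a solution is determined by its constant term, and both constant terms are `1`.
For `H`, a creative-telescoping certificate gives the recurrence
`(n+1)² a_{n+1} = (10n² + 10n + 3) a_n - 9n² a_{n-1}`, i.e. a differential equation `L_H H = 0`,
and `L ((1 - 3x) y) = (1 - 3x)³ L_H y` identically. For `Y`, the hypergeometric equation
`z(1-z) F'' + (1-2z) F' - (2/9) F = 0` composed with `w` becomes `L Y = 0` after the chain rule,
using `(1-3x)³ w = 27x²(1-x)`, `(1-3x)⁴ w' = 54x` and `(1-3x)⁵ w'' = 54 + 486x`.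
-/

section PowerSeriesODE

variable {R : Type*} [CommRing R]

lemma coeff_ofNat_mul (a : ℕ) [a.AtLeastTwo] (f : R⟦X⟧) (n : ℕ) :
    coeff n ((ofNat(a) : R⟦X⟧) * f) = ofNat(a) * coeff n f := by
  rw [← map_ofNat (C (R := R)), coeff_C_mul]

lemma derivative_ofNat (a : ℕ) [a.AtLeastTwo] : d⁄dX R (ofNat(a) : R⟦X⟧) = 0 := by
  rw [← map_ofNat (C (R := R)), derivative_C]

lemma coeff_X_mul_derivative (f : R⟦X⟧) (n : ℕ) :
    coeff n (X * d⁄dX R f) = n * coeff n f := by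
  cases n with
  | zero => simp
  | succ n => rw [coeff_succ_X_mul, coeff_derivative, mul_comm]; push_cast; rfl

lemma derivative_X_pow_succ_mul (m : ℕ) (u : R⟦X⟧) :
    d⁄dX R (X ^ (m + 1) * u) = X ^ m * (((m : R⟦X⟧) + 1) * u + X * d⁄dX R u) := by
  rw [Derivation.leibniz, Derivation.leibniz_pow, derivative_X]
  simp only [smul_eq_mul, Nat.add_sub_cancel]
  ring

lemma X_mul_derivative_X_pow_mul (m : ℕ) (v : R⟦X⟧) :
    X * d⁄dX R (X ^ m * v) = X ^ m * ((m : R⟦X⟧) * v + X * d⁄dX R v) := by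
  cases m with
  | zero => simp
  | succ m => rw [derivative_X_pow_succ_mul]; push_cast; ring

theorem eq_zero_of_ode [IsDomain R] [CharZero R] {p q r y : R⟦X⟧}
    (hp : constantCoeff p = 1) (hq : constantCoeff q = 1) (hy : constantCoeff y = 0)
    (h : X * p * d⁄dX R (d⁄dX R y) + q * d⁄dX R y + r * y = 0) : y = 0 := by
  suffices hdvd : ∀ n, X ^ n ∣ y by
    ext n
    simpa using X_pow_dvd_iff.1 (hdvd (n + 1)) n n.lt_succ_self
  intro n
  induction n with
  | zero => simp
  | succ n ih =>
    cases n with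
    | zero => simpa [X_dvd_iff] using hy
    | succ m =>
      obtain ⟨u, rfl⟩ := ih
      -- Divided by `X ^ m`, the equation has constant coefficient `(m + 1)² u(0)`.
      obtain ⟨v, hv⟩ : ∃ v, ((m : R⟦X⟧) + 1) * u + X * d⁄dX R u = v := ⟨_, rfl⟩
      have hXm : X ^ m * (p * ((m : R⟦X⟧) * v + X * d⁄dX R v) + q * v + X * r * u) = 0 := by
        rw [← h, derivative_X_pow_succ_mul, hv]
        linear_combination (-p) * X_mul_derivative_X_pow_mul m v
      have hv0 := congrArg constantCoeff
        ((mul_eq_zero.1 hXm).resolve_left (pow_ne_zero _ (X_ne_zero (R := R))))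
      simp only [← hv, map_add, map_mul, map_natCast, map_one, constantCoeff_X, hp, hq,
        zero_mul, add_zero, one_mul, map_zero] at hv0
      have hu : ((m : R) + 1) ^ 2 * constantCoeff u = 0 := by linear_combination hv0
      rw [pow_succ]
      exact mul_dvd_mul_left _ (X_dvd_iff.2 ((mul_eq_zero.1 hu).resolve_left
        (pow_ne_zero _ (Nat.cast_add_one_ne_zero m))))

end PowerSeriesODE

section Composition

variable {u : ℚ⟦X⟧}

noncomputable def partialComp (c : ℕ → ℚ) (u : ℚ⟦X⟧) (m : ℕ) : ℚ⟦X⟧ :=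
  ∑ k ∈ range m, C (c k) * u ^ k

lemma coeff_seriesComp (c : ℕ → ℚ) (u : ℚ⟦X⟧) (n : ℕ) :
    coeff n (seriesComp c u) = ∑ k ∈ range (n + 1), c k * coeff n (u ^ k) := by
  simp [seriesComp, coeff_C_mul]

lemma coeff_pow_eq_zero_of_lt (hu : constantCoeff u = 0) {n k : ℕ} (h : n < k) :
    coeff n (u ^ k) = 0 :=
  X_pow_dvd_iff.1 (pow_dvd_pow_of_dvd (X_dvd_iff.2 hu) k) n h

lemma coeff_seriesComp_eq_partialComp (hu : constantCoeff u = 0) (c : ℕ → ℚ) {n m : ℕ}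
    (h : n < m) : coeff n (seriesComp c u) = coeff n (partialComp c u m) := by
  rw [coeff_seriesComp, partialComp, map_sum]
  simp only [coeff_C_mul]
  refine sum_subset (range_subset_range.2 h) fun k _ hk => ?_
  rw [coeff_pow_eq_zero_of_lt hu (by simpa using hk), mul_zero]

lemma coeff_mul_seriesComp_eq_partialComp (hu : constantCoeff u = 0) (c : ℕ → ℚ) (v : ℚ⟦X⟧)
    {n m : ℕ} (h : n < m) :
    coeff n (v * seriesComp c u) = coeff n (v * partialComp c u m) := by
  rw [coeff_mul, coeff_mul]
  refine sum_congr rfl fun p hp => ?_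
  rw [coeff_seriesComp_eq_partialComp hu c ((HasAntidiagonal.antidiagonal.snd_le hp).trans_lt h)]

def shiftCoeff (c : ℕ → ℚ) : ℕ → ℚ
  | 0 => 0
  | k + 1 => c k

def derivCoeff (c : ℕ → ℚ) (k : ℕ) : ℚ := (k + 1) * c (k + 1)

lemma mul_seriesComp (hu : constantCoeff u = 0) (c : ℕ → ℚ) :
    u * seriesComp c u = seriesComp (shiftCoeff c) u := by
  ext n
  rw [coeff_mul_seriesComp_eq_partialComp hu c u n.lt_succ_self,
    coeff_seriesComp_eq_partialComp hu _ (show n < n + 2 by omega), partialComp, partialComp,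
    sum_range_succ' (fun k => C (shiftCoeff c k) * u ^ k) (n + 1), mul_sum]
  simp only [shiftCoeff, map_zero, zero_mul, add_zero, pow_succ]
  exact congrArg _ (sum_congr rfl fun k _ => by ring)

lemma derivative_seriesComp (hu : constantCoeff u = 0) (c : ℕ → ℚ) :
    d⁄dX ℚ (seriesComp c u) = seriesComp (derivCoeff c) u * d⁄dX ℚ u := by
  ext n
  rw [coeff_derivative, coeff_seriesComp_eq_partialComp hu c (n + 1).lt_succ_self,
    ← coeff_derivative, mul_comm _ (d⁄dX ℚ u),
    coeff_mul_seriesComp_eq_partialComp hu _ _ n.lt_succ_self, partialComp, partialComp,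
    map_sum, sum_range_succ', mul_sum]
  simp only [pow_zero, mul_one, derivative_C, add_zero, Derivation.leibniz,
    Derivation.leibniz_pow, smul_eq_mul, derivCoeff, map_mul, map_add, map_natCast, map_one]
  exact congrArg _ (sum_congr rfl fun k _ => by simp; ring)

lemma seriesComp_hypergeometric (hu : constantCoeff u = 0) {c : ℕ → ℚ}
    (hc : ∀ k : ℕ, 9 * ((k : ℚ) + 1) ^ 2 * c (k + 1) = (3 * k + 1) * (3 * k + 2) * c k) :
    9 * (u * (1 - u)) * seriesComp (derivCoeff (derivCoeff c)) u
      + 9 * (1 - 2 * u) * seriesComp (derivCoeff c) u - 2 * seriesComp c u = 0 := by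
  have hcoeff : ∀ k, 9 * shiftCoeff (derivCoeff (derivCoeff c)) k
      - 9 * shiftCoeff (shiftCoeff (derivCoeff (derivCoeff c))) k + 9 * derivCoeff c k
      - 18 * shiftCoeff (derivCoeff c) k - 2 * c k = 0 := by
    rintro (_ | _ | k) <;> simp only [shiftCoeff, derivCoeff] <;> push_cast
    · linear_combination hc 0
    · linear_combination hc 1
    · linear_combination (norm := (push_cast; ring)) hc (k + 1 + 1)
  have hsum : 9 * seriesComp (shiftCoeff (derivCoeff (derivCoeff c))) u
      - 9 * seriesComp (shiftCoeff (shiftCoeff (derivCoeff (derivCoeff c)))) u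
      + 9 * seriesComp (derivCoeff c) u - 18 * seriesComp (shiftCoeff (derivCoeff c)) u
      - 2 * seriesComp c u = 0 := by
    ext n
    simp only [map_sub, map_add, coeff_ofNat_mul, coeff_seriesComp, mul_sum, ← sum_sub_distrib,
      ← sum_add_distrib, map_zero]
    exact sum_eq_zero fun k _ => by linear_combination coeff n (u ^ k) * hcoeff k
  simp only [← mul_seriesComp hu] at hsum
  linear_combination hsum

end Composition

lemma fCoeff_succ (k : ℕ) :
    9 * ((k : ℚ) + 1) ^ 2 * fCoeff (k + 1) = (3 * k + 1) * (3 * k + 2) * fCoeff k := by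
  rw [fCoeff, fCoeff, show 3 * (k + 1) = 3 * k + 1 + 1 + 1 by ring, Nat.factorial_succ,
    Nat.factorial_succ, Nat.factorial_succ, Nat.factorial_succ, pow_succ]
  field_simp
  push_cast
  ring

section Substitution

local notation "E" => (1 - 3 * X : ℚ⟦X⟧)

lemma one_sub_three_X_ne_zero : E ≠ 0 := fun h => by simpa using congrArg constantCoeff h

lemma one_sub_three_X_mul_inv : E * E⁻¹ = 1 :=
  PowerSeries.mul_inv_cancel _ (by simp)

lemma constantCoeff_wSeries : constantCoeff wSeries = 0 := by
  simp [wSeries]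

lemma one_sub_three_X_pow_three_mul_wSeries : E ^ 3 * wSeries = 27 * X ^ 2 * (1 - X) := by
  rw [wSeries]
  linear_combination 27 * X ^ 2 * (1 - X) * ((E * E⁻¹) ^ 2 + E * E⁻¹ + 1) * one_sub_three_X_mul_inv

lemma one_sub_three_X_pow_four_mul_derivative_wSeries : E ^ 4 * d⁄dX ℚ wSeries = 54 * X := by
  have h := congrArg (d⁄dX ℚ) one_sub_three_X_pow_three_mul_wSeries
  simp only [Derivation.leibniz, Derivation.leibniz_pow, map_sub, derivative_X,
    derivative_ofNat, Derivation.map_one_eq_zero, smul_eq_mul] at h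
  push_cast at h
  linear_combination E * h + 9 * one_sub_three_X_pow_three_mul_wSeries

lemma one_sub_three_X_pow_five_mul_derivative_derivative_wSeries :
    E ^ 5 * d⁄dX ℚ (d⁄dX ℚ wSeries) = 54 + 486 * X := by
  have h := congrArg (d⁄dX ℚ) one_sub_three_X_pow_four_mul_derivative_wSeries
  simp only [Derivation.leibniz, Derivation.leibniz_pow, map_sub, derivative_X,
    derivative_ofNat, Derivation.map_one_eq_zero, smul_eq_mul] at h
  push_cast at h
  linear_combination E * h + 12 * one_sub_three_X_pow_four_mul_derivative_wSeries

end Substitution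

section Recurrence

lemma cast_choose_mul_succ (n k : ℕ) :
    ((n : ℚ) + 1) * n.choose k = ((n : ℚ) + 1 - k) * (n + 1).choose k := by
  rcases le_or_gt k (n + 1) with hk | hk
  · have := congrArg (Nat.cast (R := ℚ)) (Nat.choose_mul_succ_eq n k)
    push_cast [Nat.cast_sub hk] at this
    linear_combination this
  · simp [Nat.choose_eq_zero_of_lt hk, Nat.choose_eq_zero_of_lt (show n < k by omega)]

lemma cast_choose_succ_right (n k : ℕ) :
    ((k : ℚ) + 1) * n.choose (k + 1) = ((n : ℚ) - k) * n.choose k := by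
  rcases le_or_gt k n with hk | hk
  · have := congrArg (Nat.cast (R := ℚ)) (Nat.choose_succ_right_eq n k)
    push_cast [Nat.cast_sub hk] at this
    linear_combination this
  · simp [Nat.choose_eq_zero_of_lt hk, Nat.choose_eq_zero_of_lt (show n < k + 1 by omega)]

noncomputable def aTerm (n k : ℕ) : ℚ := (n.choose k : ℚ) ^ 2 * (2 * k).choose k

-- Zeilberger's certificate for the recurrence of `aSeq`.
noncomputable def aCertificate (m k : ℕ) : ℚ :=
  -(k : ℚ) ^ 3 * (4 * m + 8 - 3 * k) * ((m + 2).choose k : ℚ) ^ 2 * (2 * k).choose k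

lemma aTerm_telescope (m k : ℕ) :
    ((m : ℚ) + 2) ^ 2 * (((m : ℚ) + 2) ^ 2 * aTerm (m + 2) k
      - (10 * ((m : ℚ) + 1) ^ 2 + 10 * ((m : ℚ) + 1) + 3) * aTerm (m + 1) k
      + 9 * ((m : ℚ) + 1) ^ 2 * aTerm m k)
      = aCertificate m (k + 1) - aCertificate m k := by
  have e2 : ((m : ℚ) + 2) ≠ 0 := by positivity
  have e1 : ((m : ℚ) + 1) ≠ 0 := by positivity
  have ek : ((k : ℚ) + 1) ≠ 0 := by positivity
  have h1 : ((m + 1).choose k : ℚ) = ((m : ℚ) + 2 - k) * (m + 2).choose k / (m + 2) := by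
    rw [eq_div_iff e2]
    linear_combination (norm := (push_cast; ring_nf)) cast_choose_mul_succ (m + 1) k
  have h0 : (m.choose k : ℚ) = ((m : ℚ) + 1 - k) * (m + 1).choose k / (m + 1) := by
    rw [eq_div_iff e1]
    linear_combination cast_choose_mul_succ m k
  have hk : ((m + 2).choose (k + 1) : ℚ) = ((m : ℚ) + 2 - k) * (m + 2).choose k / (k + 1) := by
    rw [eq_div_iff ek]
    linear_combination (norm := (push_cast; ring_nf)) cast_choose_succ_right (m + 2) k
  have hc : ((2 * (k + 1)).choose (k + 1) : ℚ) = 2 * (2 * k + 1) * (2 * k).choose k / (k + 1) := by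
    rw [eq_div_iff ek, mul_comm]
    exact_mod_cast Nat.succ_mul_centralBinom_succ k
  simp only [aTerm, aCertificate]
  rw [h0, h1, hk, hc]
  push_cast
  field_simp
  ring

lemma aSeq_eq_sum_aTerm {n N : ℕ} (h : n < N) : (aSeq n : ℚ) = ∑ k ∈ range N, aTerm n k := by
  rw [aSeq]
  push_cast
  refine sum_subset (range_subset_range.2 h) fun k _ hk => ?_
  simp [Nat.choose_eq_zero_of_lt (show n < k by simpa using hk)]

lemma aSeq_succ_succ (m : ℕ) :
    ((m : ℚ) + 2) ^ 2 * aSeq (m + 2) = (10 * ((m : ℚ) + 1) ^ 2 + 10 * ((m : ℚ) + 1) + 3)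
      * aSeq (m + 1) - 9 * ((m : ℚ) + 1) ^ 2 * aSeq m := by
  have hsum : ((m : ℚ) + 2) ^ 2 * (((m : ℚ) + 2) ^ 2 * aSeq (m + 2)
      - (10 * ((m : ℚ) + 1) ^ 2 + 10 * ((m : ℚ) + 1) + 3) * aSeq (m + 1)
      + 9 * ((m : ℚ) + 1) ^ 2 * aSeq m) = 0 := by
    rw [aSeq_eq_sum_aTerm (N := m + 3) (by omega), aSeq_eq_sum_aTerm (N := m + 3) (by omega),
      aSeq_eq_sum_aTerm (N := m + 3) (by omega), mul_sum, mul_sum, mul_sum, ← sum_sub_distrib,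
      ← sum_add_distrib, mul_sum]
    rw [sum_congr rfl fun k _ => aTerm_telescope m k, sum_range_sub]
    simp [aCertificate]
  have e2 : ((m : ℚ) + 2) ^ 2 ≠ 0 := by positivity
  linear_combination (mul_eq_zero.1 hsum).resolve_left e2

noncomputable def opH (y : ℚ⟦X⟧) : ℚ⟦X⟧ :=
  X * ((1 - X) * (1 - 9 * X)) * d⁄dX ℚ (d⁄dX ℚ y) + (1 - 20 * X + 27 * X ^ 2) * d⁄dX ℚ y
    - 3 * (1 - 3 * X) * y

lemma opH_Hq : opH Hq = 0 := by
  have h : opH Hq = d⁄dX ℚ (X * d⁄dX ℚ Hq) - 10 * (X * d⁄dX ℚ (X * d⁄dX ℚ Hq))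
      - 10 * (X * d⁄dX ℚ Hq) - 3 * Hq
      + 9 * (X * (X * d⁄dX ℚ (X * d⁄dX ℚ Hq) + 2 * (X * d⁄dX ℚ Hq) + Hq)) := by
    simp only [opH, Derivation.leibniz, derivative_X, smul_eq_mul]
    ring
  ext n
  rw [h]
  rcases n with _ | n <;>
    simp only [map_add, map_sub, coeff_ofNat_mul, coeff_succ_X_mul, coeff_zero_X_mul,
      coeff_X_mul_derivative, coeff_derivative, Hq, coeff_mk, map_zero]
  · norm_num [aSeq, sum_range_succ]
  · linear_combination (norm := (push_cast; ring)) aSeq_succ_succ n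

end Recurrence

section Operators

local notation "E" => (1 - 3 * X : ℚ⟦X⟧)

noncomputable def opL (y : ℚ⟦X⟧) : ℚ⟦X⟧ :=
  X * ((1 - X) * (1 - 9 * X) * E ^ 2) * d⁄dX ℚ (d⁄dX ℚ y)
    + E * (1 - 17 * X + 27 * X ^ 2 - 27 * X ^ 3) * d⁄dX ℚ y - 24 * X * y

lemma opL_one_sub_three_X_mul (y : ℚ⟦X⟧) : opL (E * y) = E ^ 3 * opH y := by
  simp only [opL, opH, Derivation.leibniz, map_add, map_sub, derivative_X, derivative_ofNat,
    Derivation.map_one_eq_zero, map_zero, smul_eq_mul]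
  ring

lemma opL_seriesComp_fCoeff_wSeries : opL (seriesComp fCoeff wSeries) = 0 := by
  set W := wSeries
  set Y₀ := seriesComp fCoeff W
  set Y₁ := seriesComp (derivCoeff fCoeff) W
  set Y₂ := seriesComp (derivCoeff (derivCoeff fCoeff)) W
  have hY₀ : d⁄dX ℚ Y₀ = Y₁ * d⁄dX ℚ W := derivative_seriesComp constantCoeff_wSeries _
  have hY₁ : d⁄dX ℚ Y₁ = Y₂ * d⁄dX ℚ W := derivative_seriesComp constantCoeff_wSeries _
  have hF := seriesComp_hypergeometric constantCoeff_wSeries fCoeff_succ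
  -- Modulo the identities for `w`, `w'`, `w''`, `(1-3x)⁸ L Y₀` is `12 x (1-3x)⁸` times `hF`.
  have hE8 : E ^ 8 * opL Y₀ = 0 := by
    rw [opL, hY₀, Derivation.leibniz, hY₁, smul_eq_mul, smul_eq_mul]
    linear_combination
      (X * ((1 - X) * (1 - 9 * X) * E ^ 2) * Y₂ * (E ^ 4 * d⁄dX ℚ W + 54 * X)
        + E * (1 - 17 * X + 27 * X ^ 2 - 27 * X ^ 3) * Y₁ * E ^ 4)
        * one_sub_three_X_pow_four_mul_derivative_wSeries
      + (X * ((1 - X) * (1 - 9 * X) * E ^ 2) * Y₁ * E ^ 3)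
        * one_sub_three_X_pow_five_mul_derivative_derivative_wSeries
      + (12 * X * E ^ 8) * hF
      + (-108 * X * E ^ 2 * (E ^ 3 * Y₂ - (27 * X ^ 2 * (1 - X) + E ^ 3 * W) * Y₂ - 2 * E ^ 3 * Y₁))
        * one_sub_three_X_pow_three_mul_wSeries
  exact (mul_eq_zero.1 hE8).resolve_left (pow_ne_zero _ one_sub_three_X_ne_zero)

lemma eq_of_opL_eq_zero {y z : ℚ⟦X⟧} (hy : opL y = 0) (hz : opL z = 0)
    (h₀ : constantCoeff y = constantCoeff z) : y = z := by
  rw [opL] at hy hz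
  refine sub_eq_zero.1 <| eq_zero_of_ode (p := (1 - X) * (1 - 9 * X) * E ^ 2)
    (q := E * (1 - 17 * X + 27 * X ^ 2 - 27 * X ^ 3)) (r := -24 * X) (by simp) (by simp)
    (by simp [h₀]) ?_
  simp only [map_sub]
  linear_combination hy - hz

end Operators

/-- `H(x) = (1/(1-3x)) · ₂F₁(1/3,2/3;1; 27x²(1-x)/(1-3x)³)` in `ℚ⟦x⟧`. -/
theorem H_eq_hypergeometric :
    Hq = (1 - 3 * PowerSeries.X : PowerSeries ℚ)⁻¹ * seriesComp fCoeff wSeries := by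
  have hEH : (1 - 3 * X) * Hq = seriesComp fCoeff wSeries :=
    eq_of_opL_eq_zero (by rw [opL_one_sub_three_X_mul, opH_Hq, mul_zero])
      opL_seriesComp_fCoeff_wSeries (by simp [Hq, seriesComp, aSeq, fCoeff])
  rw [← hEH, ← mul_assoc, PowerSeries.inv_mul_cancel _ (by simp), one_mul]
end
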